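/- Let V1, V2 be K×K real invertible matrices such that ‖V2‖_F = √K, ‖V1 − V2‖_F ≤ √K·ε, λ_min(V2 V2^T) > K(2+ε)ε, where λ_min denotes the smallest eigenvalue. Then ‖(V1 V1^T)^{-1} − (V2 V2^T)^{-1}‖_F ≤ K²·(λ_min(V2 V2^T) − K(2+ε)ε)^{-1}·(λ_min(V2 V2^T))^{-1}·(2+ε)·ε. -/

import Mathlib

/-!
Put `μ = λ_min(V₂V₂ᵀ)` and `d = K(2+ε)ε`. From
`V₁V₁ᵀ − V₂V₂ᵀ = (V₁ − V₂)V₁ᵀ + V₂(V₁ − V₂)ᵀ` one gets `‖V₁V₁ᵀ − V₂V₂ᵀ‖_F ≤ d`.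
Expanding `x` in an eigenbasis of `V₂V₂ᵀ` gives `⟪x, V₂V₂ᵀx⟫ ≥ μ‖x‖²`, and since the Frobenius
norm dominates the operator norm, `⟪x, V₁V₁ᵀx⟫ ≥ (μ − d)‖x‖²` (Weyl's inequality).
A bound `⟪x, Mx⟫ ≥ c‖x‖²` with `c > 0` forces `‖Mx‖ ≥ c‖x‖`, so `M` is invertible and every
column of `M⁻¹` has norm at most `1/c`, i.e. `‖M⁻¹‖_F ≤ √K / c`. Conclude with
`M⁻¹ − N⁻¹ = M⁻¹(N − M)N⁻¹`.
-/

open Matrix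

attribute [local instance] Matrix.frobeniusNormedAddCommGroup Matrix.frobeniusNormedRing

open scoped RealInnerProductSpace

theorem LinearMap.mul_norm_le_norm_apply_of_le_inner {E : Type*} [NormedAddCommGroup E]
    [InnerProductSpace ℝ E] (T : E →ₗ[ℝ] E) {c : ℝ} (hT : ∀ x, c * ‖x‖ ^ 2 ≤ ⟪x, T x⟫) (x : E) :
    c * ‖x‖ ≤ ‖T x‖ := by
  rcases (norm_nonneg x).eq_or_lt with hx | hx
  · rw [← hx, mul_zero]
    exact norm_nonneg _
  · have := (hT x).trans (real_inner_le_norm x (T x))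
    nlinarith

namespace Matrix

theorem frobenius_norm_mul_transpose_sub_mul_transpose_le {m n 𝕜 : Type*} [Fintype m]
    [Fintype n] [RCLike 𝕜] (A B : Matrix m n 𝕜) :
    ‖A * Aᵀ - B * Bᵀ‖ ≤ ‖A - B‖ * (‖A‖ + ‖B‖) := by
  have h : A * Aᵀ - B * Bᵀ = (A - B) * Aᵀ + B * (A - B)ᵀ := by
    rw [transpose_sub, Matrix.sub_mul, Matrix.mul_sub]
    abel
  calc ‖A * Aᵀ - B * Bᵀ‖ ≤ ‖A - B‖ * ‖Aᵀ‖ + ‖B‖ * ‖(A - B)ᵀ‖ := by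
        rw [h]
        exact (norm_add_le _ _).trans (add_le_add (frobenius_norm_mul _ _) (frobenius_norm_mul _ _))
    _ = ‖A - B‖ * (‖A‖ + ‖B‖) := by
        rw [frobenius_norm_transpose, frobenius_norm_transpose]
        ring

variable {m n : Type*} [Fintype m] [Fintype n] [DecidableEq n]

theorem frobenius_norm_inv_sub_inv_le {𝕜 : Type*} [RCLike 𝕜] {A B : Matrix n n 𝕜}
    (hA : IsUnit A) (hB : IsUnit B) : ‖A⁻¹ - B⁻¹‖ ≤ ‖A⁻¹‖ * ‖A - B‖ * ‖B⁻¹‖ := by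
  rw [inv_sub_inv (iff_of_true hA hB), norm_sub_rev A B]
  exact (norm_mul_le _ _).trans (mul_le_mul_of_nonneg_right (norm_mul_le _ _) (norm_nonneg _))

theorem norm_toEuclideanLin_apply_le_frobenius_norm {𝕜 : Type*} [RCLike 𝕜] (A : Matrix m n 𝕜)
    (x : EuclideanSpace 𝕜 n) : ‖A.toEuclideanLin x‖ ≤ ‖A‖ * ‖x‖ := by
  have h := frobenius_norm_mul A (replicateCol Unit x.ofLp)
  rwa [← replicateCol_mulVec, frobenius_norm_replicateCol, frobenius_norm_replicateCol] at h

theorem frobenius_norm_sq_eq_sum_norm_sq_col {𝕜 : Type*} [RCLike 𝕜] (M : Matrix m n 𝕜) :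
    ‖M‖ ^ 2 = ∑ j, ‖M.toEuclideanLin (EuclideanSpace.single j 1)‖ ^ 2 := by
  simp only [toLpLin_apply, EuclideanSpace.norm_sq_eq, PiLp.ofLp_single, mulVec_single_one]
  rw [frobenius_norm_def, ← Real.rpow_natCast, ← Real.rpow_mul (by positivity), Finset.sum_comm]
  norm_num

theorem IsHermitian.toEuclideanLin_eigenvectorBasis {B : Matrix n n ℝ} (hB : B.IsHermitian)
    (i : n) :
    B.toEuclideanLin (hB.eigenvectorBasis i) = hB.eigenvalues i • hB.eigenvectorBasis i := by
  rw [toLpLin_apply]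
  ext j
  simpa using congrFun (hB.mulVec_eigenvectorBasis i) j

theorem IsHermitian.iInf_eigenvalues_mul_norm_sq_le_inner {B : Matrix n n ℝ}
    (hB : B.IsHermitian) (x : EuclideanSpace ℝ n) :
    (⨅ i, hB.eigenvalues i) * ‖x‖ ^ 2 ≤ ⟪x, B.toEuclideanLin x⟫ := by
  set b := hB.eigenvectorBasis
  have hT : B.toEuclideanLin.IsSymmetric := isSymmetric_toEuclideanLin_iff.mpr hB
  have hexpand : ⟪x, B.toEuclideanLin x⟫ = ∑ i, hB.eigenvalues i * ⟪b i, x⟫ ^ 2 := by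
    rw [← b.sum_inner_mul_inner]
    refine Finset.sum_congr rfl fun i _ => ?_
    rw [← hT, hB.toEuclideanLin_eigenvectorBasis, real_inner_smul_left, real_inner_comm x]
    ring
  rw [hexpand, ← b.sum_sq_inner_right, Finset.mul_sum]
  exact Finset.sum_le_sum fun i _ =>
    mul_le_mul_of_nonneg_right (ciInf_le (Finite.bddBelow_range _) i) (sq_nonneg _)

theorem IsHermitian.iInf_eigenvalues_sub_frobenius_norm_mul_norm_sq_le_inner
    {A B : Matrix n n ℝ} (hB : B.IsHermitian) (x : EuclideanSpace ℝ n) :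
    ((⨅ i, hB.eigenvalues i) - ‖A - B‖) * ‖x‖ ^ 2 ≤ ⟪x, A.toEuclideanLin x⟫ := by
  have hsplit :
      ⟪x, A.toEuclideanLin x⟫ = ⟪x, B.toEuclideanLin x⟫ + ⟪x, (A - B).toEuclideanLin x⟫ := by
    rw [map_sub, LinearMap.sub_apply, inner_sub_right]
    ring
  have hpert : -(‖A - B‖ * ‖x‖ ^ 2) ≤ ⟪x, (A - B).toEuclideanLin x⟫ := by
    have := (abs_real_inner_le_norm x ((A - B).toEuclideanLin x)).trans
      (mul_le_mul_of_nonneg_left ((A - B).norm_toEuclideanLin_apply_le_frobenius_norm x)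
        (norm_nonneg x))
    linarith [neg_abs_le ⟪x, (A - B).toEuclideanLin x⟫]
  linarith [hB.iInf_eigenvalues_mul_norm_sq_le_inner x]

theorem isUnit_of_mul_norm_sq_le_inner {A : Matrix n n ℝ} {c : ℝ} (hc : 0 < c)
    (hA : ∀ x, c * ‖x‖ ^ 2 ≤ ⟪x, A.toEuclideanLin x⟫) : IsUnit A := by
  refine mulVec_injective_iff_isUnit.mp fun u v huv => ?_
  have h := A.toEuclideanLin.mul_norm_le_norm_apply_of_le_inner hA (WithLp.toLp 2 (u - v))
  rw [toLpLin_toLp, toLin'_apply, mulVec_sub, huv, sub_self, WithLp.toLp_zero, norm_zero] at h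
  have : ‖WithLp.toLp 2 (u - v)‖ = 0 :=
    le_antisymm (nonpos_of_mul_nonpos_right h hc) (norm_nonneg _)
  simpa [sub_eq_zero] using this

theorem frobenius_norm_inv_le_of_mul_norm_sq_le_inner {A : Matrix n n ℝ} {c : ℝ} (hc : 0 < c)
    (hA : ∀ x, c * ‖x‖ ^ 2 ≤ ⟪x, A.toEuclideanLin x⟫) :
    ‖A⁻¹‖ ≤ √(Fintype.card n) / c := by
  have hAA : A * A⁻¹ = 1 :=
    mul_nonsing_inv _ ((isUnit_iff_isUnit_det A).mp (isUnit_of_mul_norm_sq_le_inner hc hA))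
  have hcol : ∀ j, ‖A⁻¹.toEuclideanLin (EuclideanSpace.single j 1)‖ ≤ 1 / c := fun j => by
    have h := A.toEuclideanLin.mul_norm_le_norm_apply_of_le_inner hA
      (A⁻¹.toEuclideanLin (EuclideanSpace.single j 1))
    rw [← LinearMap.comp_apply, ← toLpLin_mul_same, hAA, toLpLin_one, LinearMap.id_apply,
      PiLp.norm_single, norm_one] at h
    exact (le_div_iff₀' hc).mpr h
  have hsq : ‖A⁻¹‖ ^ 2 ≤ Fintype.card n / c ^ 2 := by
    rw [frobenius_norm_sq_eq_sum_norm_sq_col]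
    calc ∑ j, ‖A⁻¹.toEuclideanLin (EuclideanSpace.single j 1)‖ ^ 2 ≤ ∑ _j : n, (1 / c) ^ 2 :=
          Finset.sum_le_sum fun j _ => pow_le_pow_left₀ (norm_nonneg _) (hcol j) 2
      _ = Fintype.card n / c ^ 2 := by simp [div_eq_mul_inv]
  rw [← Real.sqrt_sq hc.le, ← Real.sqrt_div' _ (sq_nonneg c)]
  exact Real.le_sqrt_of_sq_le hsq

end Matrix

theorem stmt11_general {K : ℕ} (V1 V2 : Matrix (Fin K) (Fin K) ℝ)
    (ε : ℝ)
    (h2 : ‖V2‖ = Real.sqrt K) (h12 : ‖V1 - V2‖ ≤ Real.sqrt K * ε)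
    (hH : (V2 * V2ᵀ).IsHermitian)
    (hgap : (K : ℝ) * (2 + ε) * ε < ⨅ i, hH.eigenvalues i) :
    ‖(V1 * V1ᵀ)⁻¹ - (V2 * V2ᵀ)⁻¹‖ ≤
      (K : ℝ) ^ 2 * ((⨅ i, hH.eigenvalues i) - K * (2 + ε) * ε)⁻¹
        * (⨅ i, hH.eigenvalues i)⁻¹ * (2 + ε) * ε := by
  set μ := ⨅ i, hH.eigenvalues i
  set d := (K : ℝ) * (2 + ε) * ε
  have hsK : √K * √K = (K : ℝ) := Real.mul_self_sqrt K.cast_nonneg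
  have hsum : ‖V1‖ + ‖V2‖ ≤ √K * (2 + ε) := by
    linarith [norm_le_norm_add_norm_sub' V1 V2]
  have hdiff : ‖V1 * V1ᵀ - V2 * V2ᵀ‖ ≤ d :=
    calc ‖V1 * V1ᵀ - V2 * V2ᵀ‖ ≤ ‖V1 - V2‖ * (‖V1‖ + ‖V2‖) :=
          frobenius_norm_mul_transpose_sub_mul_transpose_le V1 V2
      _ ≤ (√K * ε) * (√K * (2 + ε)) :=
          mul_le_mul h12 hsum (by positivity) ((norm_nonneg _).trans h12)
      _ = d := by linear_combination (2 + ε) * ε * hsK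
  have hd : 0 ≤ d := (norm_nonneg _).trans hdiff
  have hA : ∀ x, (μ - d) * ‖x‖ ^ 2 ≤ ⟪x, (V1 * V1ᵀ).toEuclideanLin x⟫ := fun x =>
    (mul_le_mul_of_nonneg_right (by linarith) (sq_nonneg _)).trans
      (hH.iInf_eigenvalues_sub_frobenius_norm_mul_norm_sq_le_inner x)
  have hB := hH.iInf_eigenvalues_mul_norm_sq_le_inner
  have hcA : 0 < μ - d := by linarith
  have hcB : 0 < μ := by linarith
  calc ‖(V1 * V1ᵀ)⁻¹ - (V2 * V2ᵀ)⁻¹‖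
      ≤ ‖(V1 * V1ᵀ)⁻¹‖ * ‖V1 * V1ᵀ - V2 * V2ᵀ‖ * ‖(V2 * V2ᵀ)⁻¹‖ :=
        frobenius_norm_inv_sub_inv_le (isUnit_of_mul_norm_sq_le_inner hcA hA)
          (isUnit_of_mul_norm_sq_le_inner hcB hB)
    _ ≤ √K / (μ - d) * d * (√K / μ) := by
        have hinvA := frobenius_norm_inv_le_of_mul_norm_sq_le_inner hcA hA
        have hinvB := frobenius_norm_inv_le_of_mul_norm_sq_le_inner hcB hB
        rw [Fintype.card_fin] at hinvA hinvB
        gcongr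
    _ = (K : ℝ) ^ 2 * (μ - d)⁻¹ * μ⁻¹ * (2 + ε) * ε := by
        field_simp
        linear_combination (2 + ε) * ε * (K : ℝ) * hsK

/-- If `‖V₂‖_F = √K`, `‖V₁ − V₂‖_F ≤ √K ε`, both invertible, and
`λ_min(V₂V₂ᵀ) > K(2+ε)ε`, then
`‖(V₁V₁ᵀ)⁻¹ − (V₂V₂ᵀ)⁻¹‖_F ≤ K² (λ_min(V₂V₂ᵀ) − K(2+ε)ε)⁻¹ (λ_min(V₂V₂ᵀ))⁻¹ (2+ε) ε`. -/
theorem stmt11 {K : ℕ} (hK : 0 < K) (V1 V2 : Matrix (Fin K) (Fin K) ℝ)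
    (hV1 : IsUnit V1.det) (hV2 : IsUnit V2.det)
    (ε : ℝ) (hε : 0 < ε)
    (h2 : ‖V2‖ = Real.sqrt K) (h12 : ‖V1 - V2‖ ≤ Real.sqrt K * ε)
    (hH : (V2 * V2ᵀ).IsHermitian)
    (hgap : (K : ℝ) * (2 + ε) * ε < ⨅ i, hH.eigenvalues i) :
    ‖(V1 * V1ᵀ)⁻¹ - (V2 * V2ᵀ)⁻¹‖ ≤
      (K : ℝ) ^ 2 * ((⨅ i, hH.eigenvalues i) - K * (2 + ε) * ε)⁻¹
        * (⨅ i, hH.eigenvalues i)⁻¹ * (2 + ε) * ε :=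
  stmt11_general V1 V2 ε h2 h12 hH hgap
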